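/- Let t ∈ ℝ and θ ∈ Θ with φ_t(θ) > 0. Then φ_t(T^{−k}θ) > 0 for every k ≥ 0, and for every ℓ ≥ 1 the identity log φ_t(θ) = ∑_{k=1}^{ℓ} (log g(T^{−k}θ) − t) + ∑_{k=1}^{ℓ} H(φ_t(T^{−k}θ)) + log φ_t(T^{−ℓ}θ) holds, where H(x) := log(h(x)/x) for x > 0. -/

import Mathlib

/-!
Since `f_t(θ, M) ≤ M`, the sequence `ψ_{t,n+1}(θ)` decreases to `φ_t(θ)`, and
`ψ_{t,n+2}(θ) = f_t(T⁻¹θ, ψ_{t,n+1}(T⁻¹θ))`; continuity of `h` lets us pass to the limit, so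
`φ_t(θ) = e^{-t} g(T⁻¹θ) h(φ_t(T⁻¹θ))`. As `h(0) = 0`, positivity of `φ_t` propagates from `θ`
to `T⁻¹θ`, and the logarithm of this relation reads
`log φ_t(θ) - log φ_t(T⁻¹θ) = log g(T⁻¹θ) - t + H(φ_t(T⁻¹θ))`, which telescopes along the
backward orbit.
-/

open MeasureTheory Filter Topology

/-- The general setting of the paper: a measurable base system with invertible
driving map `T`, a concave fibre function `h` (with its derivative `h'` on `[0,∞)`)
and a bounded measurable positive function `g`. -/
structure Setting (Θ : Type*) [MeasurableSpace Θ] where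
  T : Θ → Θ
  Tinv : Θ → Θ
  left_inv : Function.LeftInverse Tinv T
  right_inv : Function.RightInverse Tinv T
  T_meas : Measurable T
  Tinv_meas : Measurable Tinv
  h : ℝ → ℝ
  h' : ℝ → ℝ
  h_hasDeriv : ∀ x ∈ Set.Ici (0 : ℝ), HasDerivWithinAt h (h' x) (Set.Ici 0) x
  h'_cont : ContinuousOn h' (Set.Ici 0)
  h_strictConcave : StrictConcaveOn ℝ (Set.Ici 0) h
  h_zero : h 0 = 0
  h'_pos : ∀ x : ℝ, 0 < x → 0 < h' x
  h'_zero : h' 0 = 1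
  h_sublinear : Tendsto (fun x => h x / x) atTop (𝓝 0)
  g : Θ → ℝ
  g_pos : ∀ θ, 0 < g θ
  g_bdd : ∃ C : ℝ, ∀ θ, g θ ≤ C
  g_meas : Measurable g

namespace Setting

variable {Θ : Type*} [MeasurableSpace Θ]

/-- The fibre maps `f_t(θ,x) = e^{-t} g(θ) h(x)`. -/
noncomputable def f (S : Setting Θ) (t : ℝ) (θ : Θ) (x : ℝ) : ℝ :=
  Real.exp (-t) * S.g θ * S.h x

/-- The iterated fibre maps: `fn t 0 θ x = x` and
`fn t (n+1) θ x = f t (T^[n] θ) (fn t n θ x)`, so that `fn t 1 = f t`. -/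
noncomputable def fn (S : Setting Θ) (t : ℝ) : ℕ → Θ → ℝ → ℝ
  | 0, _, x => x
  | n + 1, θ, x => S.f t (S.T^[n] θ) (S.fn t n θ x)

/-- `ψ_{t,n}(θ) = f_t^n(T^{-n}θ, M)`. -/
noncomputable def ψ (S : Setting Θ) (t M : ℝ) (n : ℕ) (θ : Θ) : ℝ :=
  S.fn t n (S.Tinv^[n] θ) M

/-- The maximal invariant function `φ_t(θ) = inf_{n ≥ 1} ψ_{t,n}(θ)`. -/
noncomputable def φ (S : Setting Θ) (t M : ℝ) (θ : Θ) : ℝ :=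
  ⨅ n : ℕ, S.ψ t M (n + 1) θ

/-- The zero set `N_t = {θ : φ_t(θ) = 0}`. -/
noncomputable def Nset (S : Setting Θ) (t M : ℝ) : Set Θ := {θ | S.φ t M θ = 0}

/-- The critical parameter `t_c(θ) = inf {t : φ_t(θ) = 0}`. -/
noncomputable def tc (S : Setting Θ) (M : ℝ → ℝ) (θ : Θ) : ℝ :=
  sInf {t : ℝ | S.φ t (M t) θ = 0}

/-- The bifurcation set `S_t = {θ : t_c(θ) = t}`. -/
noncomputable def Sset (S : Setting Θ) (M : ℝ → ℝ) (t : ℝ) : Set Θ :=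
  {θ | S.tc M θ = t}

/-- The Birkhoff average `Γ^{(n)}(θ) = (1/n) ∑_{k=1}^n log g(T^{-k}θ)`. -/
noncomputable def Γn (S : Setting Θ) (n : ℕ) (θ : Θ) : ℝ :=
  (∑ k ∈ Finset.range n, Real.log (S.g (S.Tinv^[k + 1] θ))) / n

/-- The lower backwards Lyapunov average `Γ(θ) = liminf_n Γ^{(n)}(θ)`. -/
noncomputable def Γ (S : Setting Θ) (θ : Θ) : ℝ :=
  Filter.liminf (fun n : ℕ => S.Γn n θ) Filter.atTop

/-- The averaged exponent `γ(μ) = ∫ log g dμ`. -/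
noncomputable def γfn (S : Setting Θ) (μ : Measure Θ) : ℝ :=
  ∫ θ, Real.log (S.g θ) ∂μ

/-- The function `H(x) = log (h(x)/x)`. -/
noncomputable def Hfn (S : Setting Θ) (x : ℝ) : ℝ := Real.log (S.h x / x)

end Setting

namespace Setting

variable {Θ : Type*} [MeasurableSpace Θ] (S : Setting Θ)

theorem continuousOn_h : ContinuousOn S.h (Set.Ici 0) :=
  fun x hx => (S.h_hasDeriv x hx).continuousWithinAt

theorem strictMonoOn_h : StrictMonoOn S.h (Set.Ici 0) := by
  refine strictMonoOn_of_deriv_pos (convex_Ici 0) S.continuousOn_h fun x hx => ?_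
  rw [interior_Ici] at hx
  rw [((S.h_hasDeriv x (Set.mem_Ici.mpr hx.le)).hasDerivAt (Ici_mem_nhds hx)).deriv]
  exact S.h'_pos x hx

theorem h_pos {x : ℝ} (hx : 0 < x) : 0 < S.h x := by
  simpa [S.h_zero] using S.strictMonoOn_h Set.self_mem_Ici hx.le hx

theorem h_nonneg {x : ℝ} (hx : 0 ≤ x) : 0 ≤ S.h x := by
  simpa [S.h_zero] using S.strictMonoOn_h.monotoneOn Set.self_mem_Ici hx hx

section FibreMaps

variable (t : ℝ)

theorem f_zero (θ : Θ) : S.f t θ 0 = 0 := by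
  simp [f, S.h_zero]

theorem f_nonneg (θ : Θ) {x : ℝ} (hx : 0 ≤ x) : 0 ≤ S.f t θ x :=
  mul_nonneg (mul_nonneg (Real.exp_pos _).le (S.g_pos θ).le) (S.h_nonneg hx)

theorem f_monotoneOn (θ : Θ) : MonotoneOn (S.f t θ) (Set.Ici 0) := fun _ hx _ hy hxy =>
  mul_le_mul_of_nonneg_left (S.strictMonoOn_h.monotoneOn hx hy hxy)
    (mul_nonneg (Real.exp_pos _).le (S.g_pos θ).le)

theorem continuousOn_f (θ : Θ) : ContinuousOn (S.f t θ) (Set.Ici 0) :=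
  continuousOn_const.mul S.continuousOn_h

theorem fn_nonneg : ∀ (n : ℕ) (θ : Θ) {x : ℝ}, 0 ≤ x → 0 ≤ S.fn t n θ x
  | 0, _, _, hx => hx
  | n + 1, θ, _, hx => S.f_nonneg t _ (fn_nonneg n θ hx)

theorem fn_mono : ∀ (n : ℕ) (θ : Θ) {x y : ℝ}, 0 ≤ x → x ≤ y → S.fn t n θ x ≤ S.fn t n θ y
  | 0, _, _, _, _, hxy => hxy
  | n + 1, θ, _, _, hx, hxy =>
    S.f_monotoneOn t _ (S.fn_nonneg t n θ hx) (S.fn_nonneg t n θ (hx.trans hxy))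
      (fn_mono n θ hx hxy)

theorem fn_succ' : ∀ (n : ℕ) (θ : Θ) (x : ℝ), S.fn t (n + 1) θ x = S.fn t n (S.T θ) (S.f t θ x)
  | 0, _, _ => rfl
  | n + 1, θ, x => by
    rw [fn, fn_succ' n θ x, Function.iterate_succ_apply]
    rfl

end FibreMaps

section MaximalInvariantFunction

variable {t M : ℝ}

theorem ψ_succ (n : ℕ) (θ : Θ) :
    S.ψ t M (n + 1) θ = S.f t (S.Tinv θ) (S.ψ t M n (S.Tinv θ)) := by
  rw [ψ, ψ, fn, Function.iterate_succ_apply, S.right_inv.iterate n]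

theorem ψ_nonneg (hM : 0 ≤ M) (n : ℕ) (θ : Θ) : 0 ≤ S.ψ t M n θ :=
  S.fn_nonneg t n _ hM

theorem ψ_succ_le (hM : 0 ≤ M) (hMf : ∀ θ, S.f t θ M ≤ M) (n : ℕ) (θ : Θ) :
    S.ψ t M (n + 1) θ ≤ S.ψ t M n θ := by
  rw [ψ, ψ, fn_succ', Function.iterate_succ_apply', S.right_inv]
  exact S.fn_mono t n _ (S.f_nonneg t _ hM) (hMf _)

theorem φ_nonneg (hM : 0 ≤ M) (θ : Θ) : 0 ≤ S.φ t M θ :=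
  le_ciInf fun n => S.ψ_nonneg hM (n + 1) θ

theorem tendsto_ψ_φ (hM : 0 ≤ M) (hMf : ∀ θ, S.f t θ M ≤ M) (θ : Θ) :
    Tendsto (fun n => S.ψ t M (n + 1) θ) atTop (𝓝[Set.Ici 0] (S.φ t M θ)) :=
  tendsto_nhdsWithin_iff.mpr
    ⟨tendsto_atTop_ciInf (antitone_nat_of_succ_le fun n => S.ψ_succ_le hM hMf (n + 1) θ)
        ⟨0, Set.forall_mem_range.mpr fun n => S.ψ_nonneg hM (n + 1) θ⟩,
      Eventually.of_forall fun n => S.ψ_nonneg hM (n + 1) θ⟩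

theorem φ_eq_f_φ_Tinv (hM : 0 ≤ M) (hMf : ∀ θ, S.f t θ M ≤ M) (θ : Θ) :
    S.φ t M θ = S.f t (S.Tinv θ) (S.φ t M (S.Tinv θ)) := by
  have hlim : Tendsto (fun n => S.ψ t M (n + 2) θ) atTop (𝓝 (S.φ t M θ)) :=
    tendsto_nhds_of_tendsto_nhdsWithin <|
      (S.tendsto_ψ_φ hM hMf θ).comp (tendsto_add_atTop_nat 1)
  have hlim' : Tendsto (fun n => S.ψ t M (n + 2) θ) atTop
      (𝓝 (S.f t (S.Tinv θ) (S.φ t M (S.Tinv θ)))) := by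
    simp only [S.ψ_succ (_ + 1) θ]
    exact (S.continuousOn_f t _ _ (S.φ_nonneg hM _)).tendsto.comp (S.tendsto_ψ_φ hM hMf _)
  exact tendsto_nhds_unique hlim hlim'

theorem φ_Tinv_pos (hM : 0 ≤ M) (hMf : ∀ θ, S.f t θ M ≤ M) {θ : Θ} (hpos : 0 < S.φ t M θ) :
    0 < S.φ t M (S.Tinv θ) := by
  refine (S.φ_nonneg hM _).lt_of_ne fun hzero => hpos.ne' ?_
  rw [S.φ_eq_f_φ_Tinv hM hMf, ← hzero, f_zero]

theorem φ_iterate_Tinv_pos (hM : 0 ≤ M) (hMf : ∀ θ, S.f t θ M ≤ M) {θ : Θ}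
    (hpos : 0 < S.φ t M θ) : ∀ k : ℕ, 0 < S.φ t M (S.Tinv^[k] θ)
  | 0 => hpos
  | k + 1 => by
    rw [Function.iterate_succ_apply']
    exact S.φ_Tinv_pos hM hMf (φ_iterate_Tinv_pos hM hMf hpos k)

theorem log_φ_sub_log_φ_Tinv (hM : 0 ≤ M) (hMf : ∀ θ, S.f t θ M ≤ M) {θ : Θ}
    (hpos : 0 < S.φ t M θ) :
    Real.log (S.φ t M θ) - Real.log (S.φ t M (S.Tinv θ)) =
      (Real.log (S.g (S.Tinv θ)) - t) + S.Hfn (S.φ t M (S.Tinv θ)) := by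
  have hx := S.φ_Tinv_pos hM hMf hpos
  have hhx := S.h_pos hx
  rw [S.φ_eq_f_φ_Tinv hM hMf θ, f, Hfn, Real.log_mul (by positivity [S.g_pos (S.Tinv θ)]) hhx.ne',
    Real.log_mul (Real.exp_pos _).ne' (S.g_pos _).ne', Real.log_exp,
    Real.log_div hhx.ne' hx.ne']
  ring

theorem log_φ_eq_sum (hM : 0 ≤ M) (hMf : ∀ θ, S.f t θ M ≤ M) {θ : Θ} (hpos : 0 < S.φ t M θ)
    (ℓ : ℕ) :
    Real.log (S.φ t M θ) =
      (∑ k ∈ Finset.range ℓ, (Real.log (S.g (S.Tinv^[k + 1] θ)) - t)) +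
      (∑ k ∈ Finset.range ℓ, S.Hfn (S.φ t M (S.Tinv^[k + 1] θ))) +
      Real.log (S.φ t M (S.Tinv^[ℓ] θ)) := by
  have hstep (k : ℕ) :
      (Real.log (S.g (S.Tinv^[k + 1] θ)) - t) + S.Hfn (S.φ t M (S.Tinv^[k + 1] θ)) =
        Real.log (S.φ t M (S.Tinv^[k] θ)) - Real.log (S.φ t M (S.Tinv^[k + 1] θ)) := by
    rw [Function.iterate_succ_apply',
      S.log_φ_sub_log_φ_Tinv hM hMf (S.φ_iterate_Tinv_pos hM hMf hpos k)]
  rw [← Finset.sum_add_distrib, Finset.sum_congr rfl fun k _ => hstep k,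
    Finset.sum_range_sub' (fun k => Real.log (S.φ t M (S.Tinv^[k] θ)))]
  simp

end MaximalInvariantFunction

end Setting

/-- if `φ_t(θ) > 0`, then `φ_t(T^{-k}θ) > 0` for all `k ≥ 0` and, for all
`ℓ ≥ 1`, `log φ_t(θ) = ∑_{k=1}^ℓ (log g(T^{-k}θ) - t) + ∑_{k=1}^ℓ H(φ_t(T^{-k}θ))
+ log φ_t(T^{-ℓ}θ)`, where `H(x) = log (h(x)/x)`. -/
theorem stmt7 {Θ : Type*} [MeasurableSpace Θ] (S : Setting Θ) (t M : ℝ)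
    (hM : 0 < M) (hMf : ∀ θ, S.f t θ M < M) (θ : Θ) (hpos : 0 < S.φ t M θ) :
    (∀ k : ℕ, 0 < S.φ t M (S.Tinv^[k] θ)) ∧
    (∀ ℓ : ℕ, 1 ≤ ℓ →
      Real.log (S.φ t M θ) =
        (∑ k ∈ Finset.range ℓ, (Real.log (S.g (S.Tinv^[k + 1] θ)) - t)) +
        (∑ k ∈ Finset.range ℓ, S.Hfn (S.φ t M (S.Tinv^[k + 1] θ))) +
        Real.log (S.φ t M (S.Tinv^[ℓ] θ))) :=
  have hMf' : ∀ θ, S.f t θ M ≤ M := fun θ => (hMf θ).le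
  ⟨S.φ_iterate_Tinv_pos hM.le hMf' hpos, fun ℓ _ => S.log_φ_eq_sum hM.le hMf' hpos ℓ⟩
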